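/- Let G act on a measure space (Ω, ν) by measure-preserving transformations of the form β_g(ω, t) = (σ_g ω, t + c(g⁻¹, ω)) on Ω₀ × ℝ with ν = μ ⊗ λ, where μ is G-invariant. If c is a measurable cocycle such that for μ-a.e. ω, |c(g_n, ω)| → ∞ for every sequence g_n → ∞, and there is a uniform integrable bound, then for ξ = 1 ⊗ h with h(t) = e^{−t²}, the matrix coefficient ⟨π(g_n)ξ, ξ⟩ of the Koopman representation tends to 0. -/

import Mathlib

/-!
Completing the square, `(t + a)² + t² = 2 (t + a/2)² + a²/2`, evaluates the inner Gaussian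
integral as `√(π/2) · e^{-a²/2}` with `a = c(gₙ, ω)`. These functions are bounded by `√(π/2)` and
tend to `0` wherever `|c(gₙ, ω)| → ∞`, i.e. `μ`-a.e., so dominated convergence on the probability
space `(Ω₀, μ)` gives the limit.
-/

open MeasureTheory Filter Real
open scoped Topology

theorem integral_exp_neg_sq_add_mul_exp_neg_sq (a : ℝ) :
    ∫ t : ℝ, exp (-(t + a) ^ 2) * exp (-t ^ 2) = √(π / 2) * exp (-a ^ 2 / 2) := by
  have complete_square : ∀ t : ℝ, exp (-(t + a) ^ 2) * exp (-t ^ 2)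
      = exp (-2 * (t + a / 2) ^ 2) * exp (-a ^ 2 / 2) := by
    intro t
    rw [← exp_add, ← exp_add]
    ring_nf
  simp_rw [complete_square]
  rw [integral_mul_const, integral_add_right_eq_self (fun t => exp (-2 * t ^ 2)),
    integral_gaussian]

theorem norm_mul_exp_neg_sq_div_two_le (C a : ℝ) (hC : 0 ≤ C) :
    ‖C * exp (-a ^ 2 / 2)‖ ≤ C := by
  have hexp : exp (-a ^ 2 / 2) ≤ 1 := exp_le_one_iff.mpr (by nlinarith [sq_nonneg a])
  rw [Real.norm_eq_abs, abs_of_nonneg (by positivity)]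
  exact mul_le_of_le_one_right hC hexp

theorem tendsto_exp_neg_sq_div_two_nhds_zero {ι : Type*} {l : Filter ι} {u : ι → ℝ}
    (hu : Tendsto (fun i => |u i|) l atTop) :
    Tendsto (fun i => exp (-u i ^ 2 / 2)) l (𝓝 0) := by
  have hsq : Tendsto (fun i => u i ^ 2 / 2) l atTop := by
    simpa only [Function.comp_def, sq_abs] using
      ((tendsto_pow_atTop two_ne_zero).comp hu).atTop_div_const two_pos
  simpa only [Function.comp_def, neg_div] using tendsto_exp_neg_atTop_nhds_zero.comp hsq

theorem koopman_coefficient_skew_product_tendsto_zero_general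
    {G Ω₀ : Type*} [MeasurableSpace Ω₀] (μ : Measure Ω₀)
    [IsProbabilityMeasure μ]
    (c : G → Ω₀ → ℝ) (hc : ∀ g, Measurable (c g))
    (g : ℕ → G)
    (hproper : ∀ᵐ ω ∂μ, Tendsto (fun n => |c (g n) ω|) atTop atTop) :
    Tendsto
      (fun n => ∫ ω, (∫ t : ℝ, Real.exp (-(t + c (g n) ω) ^ 2) * Real.exp (-t ^ 2)) ∂μ)
      atTop (𝓝 0) := by
  simp_rw [integral_exp_neg_sq_add_mul_exp_neg_sq]
  rw [← integral_zero Ω₀ ℝ]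
  refine tendsto_integral_of_dominated_convergence (fun _ => √(π / 2)) (fun n => ?_)
    (integrable_const _) (fun n => ae_of_all _ fun ω => ?_) ?_
  · have hcn := hc (g n)
    fun_prop
  · exact norm_mul_exp_neg_sq_div_two_le _ _ (sqrt_nonneg _)
  · filter_upwards [hproper] with ω hω
    simpa using (tendsto_exp_neg_sq_div_two_nhds_zero hω).const_mul √(π / 2)

/-- Skew-product setting: `G` acts on a probability space `(Ω₀, μ)` preserving `μ`, with a
measurable real cocycle `c` (so `β_g(ω,t) = (g•ω, t + c(g⁻¹,ω))` preserves `μ ⊗ λ`).  If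
along a sequence `gₙ → ∞` one has `|c(gₙ, ω)| → ∞` for `μ`-a.e. `ω`, and the inner
integrals admit a uniform integrable bound, then the matrix coefficient
`⟨π(gₙ)ξ, ξ⟩ = ∫_Ω ∫_ℝ e^{−(t + c(gₙ,ω))²} e^{−t²} dt dμ(ω)` of the Koopman
representation at `ξ = 1 ⊗ h`, `h(t) = e^{−t²}`, tends to `0`. -/
theorem koopman_coefficient_skew_product_tendsto_zero
    {G Ω₀ : Type*} [Group G] [MeasurableSpace Ω₀] (μ : Measure Ω₀)
    [IsProbabilityMeasure μ] [MulAction G Ω₀]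
    (hmeas : ∀ g : G, Measurable fun ω : Ω₀ => g • ω)
    (hpres : ∀ g : G, MeasurePreserving (fun ω : Ω₀ => g • ω) μ μ)
    (c : G → Ω₀ → ℝ) (hc : ∀ g, Measurable (c g))
    (hcoc : ∀ g h ω, c (g * h) ω = c g ω + c h (g⁻¹ • ω))
    (g : ℕ → G)
    (hproper : ∀ᵐ ω ∂μ, Tendsto (fun n => |c (g n) ω|) atTop atTop)
    (hbound : ∃ b : Ω₀ → ℝ, Integrable b μ ∧ ∀ n, ∀ᵐ ω ∂μ,
      |∫ t : ℝ, Real.exp (-(t + c (g n) ω) ^ 2) * Real.exp (-t ^ 2)| ≤ b ω) :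
    Tendsto
      (fun n => ∫ ω, (∫ t : ℝ, Real.exp (-(t + c (g n) ω) ^ 2) * Real.exp (-t ^ 2)) ∂μ)
      atTop (𝓝 0) :=
  koopman_coefficient_skew_product_tendsto_zero_general μ c hc g hproper
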